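/- Let κ > 0, γ > 0, and θ = 2/κ. Define G(iω) = −2i/(iω + κ/2) for ω ∈ ℝ. Then for all ω ∈ ℝ, γ + (1 + θ i ω) G(iω) + (1 − θ i ω) conj(G(iω)) > 0 (as a real number). -/

import Mathlib

/-!
With `θ = 2/κ` the multiplier `1 + θ i ω = θ (i ω + κ/2)` cancels the pole of `G`, so
`(1 + θ i ω) G(i ω) = -4i/κ` is purely imaginary. The last two terms are conjugate to each
other, hence they cancel and the whole expression equals `γ`.
-/

open Complex

theorem one_add_mul_mul_div_add_eq_mul {θ a : ℂ} (c : ℂ) {z : ℂ} (hθa : θ * a = 1)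
    (hz : z + a ≠ 0) : (1 + θ * z) * (c / (z + a)) = θ * c := by
  rw [← hθa, ← mul_add, add_comm a, mul_assoc, mul_div_cancel₀ _ hz]

theorem I_mul_ofReal_add_ofReal_div_two_ne_zero (ω : ℝ) {κ : ℝ} (hκ : κ ≠ 0) :
    I * (ω : ℂ) + (κ : ℂ) / 2 ≠ 0 := fun h => by
  simpa [hκ] using congrArg re h

theorem one_sub_ofReal_mul_I_mul_conj (θ ω : ℝ) (w : ℂ) :
    (1 - (θ : ℂ) * ω * I) * (starRingEnd ℂ) w = (starRingEnd ℂ) ((1 + (θ : ℂ) * ω * I) * w) := by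
  simp [map_mul, conj_ofReal, conj_I, sub_eq_add_neg]

/-- The Popov frequency-domain condition for the Kerr-cavity example:
with `θ = 2/κ`, for every `γ > 0`, `κ > 0` and every `ω ∈ ℝ`,
`γ + (1 + θ i ω) G(iω) + (1 − θ i ω) conj(G(iω)) > 0` as a real number. -/
theorem kerr_popov_condition (κ γ : ℝ) (hκ : 0 < κ) (hγ : 0 < γ) (ω : ℝ) :
    0 < ((γ : ℂ) + (1 + (2 / κ : ℝ) * (ω : ℂ) * I) * (-2 * I / (I * (ω : ℂ) + (κ : ℂ) / 2))
        + (1 - (2 / κ : ℝ) * (ω : ℂ) * I) *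
          (starRingEnd ℂ) (-2 * I / (I * (ω : ℂ) + (κ : ℂ) / 2))).re
    ∧ ((γ : ℂ) + (1 + (2 / κ : ℝ) * (ω : ℂ) * I) * (-2 * I / (I * (ω : ℂ) + (κ : ℂ) / 2))
        + (1 - (2 / κ : ℝ) * (ω : ℂ) * I) *
          (starRingEnd ℂ) (-2 * I / (I * (ω : ℂ) + (κ : ℂ) / 2))).im = 0 := by
  set θ : ℝ := 2 / κ
  have hθκ : (θ : ℂ) * ((κ : ℂ) / 2) = 1 := by
    push_cast [θ]
    field_simp [ofReal_ne_zero.mpr hκ.ne']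
  have hcancel : (1 + (θ : ℂ) * ω * I) * (-2 * I / (I * ω + (κ : ℂ) / 2)) = θ * (-2 * I) := by
    rw [mul_assoc, mul_comm (ω : ℂ) I]
    exact one_add_mul_mul_div_add_eq_mul _ hθκ (I_mul_ofReal_add_ofReal_div_two_ne_zero ω hκ.ne')
  have hsum : (γ : ℂ) + (1 + (θ : ℂ) * ω * I) * (-2 * I / (I * ω + (κ : ℂ) / 2))
      + (1 - (θ : ℂ) * ω * I) * (starRingEnd ℂ) (-2 * I / (I * ω + (κ : ℂ) / 2)) = γ := by
    rw [one_sub_ofReal_mul_I_mul_conj, hcancel, add_assoc, add_conj]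
    simp
  rw [hsum]
  simpa using hγ
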